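/- Let (G,g) be a connected weighted graph and let d ≥ 1. Then, up to isomorphism, there are only finitely many unramified finite harmonic morphisms φ : (G′,g′) → (G,g) of degree d with G′ connected. Here two such morphisms φ_1 : G′_1 → G and φ_2 : G′_2 → G are isomorphic if there is an isomorphism of weighted graphs α : G′_1 → G′_2 with φ_2∘α = φ_1 and d_{φ_2}∘α = d_{φ_1}. -/

import Mathlib

namespace TropDR

open Finset

/-- `Finset.filter` with classical decidability. -/
noncomputable def cfilter {α : Type*} (p : α → Prop) (s : Finset α) : Finset α :=
  @Finset.filter α p (Classical.decPred p) s

/-- A graph with legs: a finite set `X` together with an idempotent root map `rt`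
and an involution `inv` fixing every root vertex. -/
structure PGraph where
  X : Type
  [fintypeX : Fintype X]
  [decEqX : DecidableEq X]
  rt : X → X
  inv : X → X
  rt_idem : ∀ x, rt (rt x) = rt x
  inv_invol : ∀ x, inv (inv x) = x
  inv_fix_rt : ∀ x, inv (rt x) = rt x

attribute [instance] PGraph.fintypeX PGraph.decEqX

namespace PGraph

variable (G : PGraph)

/-- Vertices are the fixed points (= the image) of the root map. -/
def IsVertex (x : G.X) : Prop := G.rt x = x

/-- Half-edges are the non-vertices. -/
def IsHalf (x : G.X) : Prop := G.rt x ≠ x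

/-- Legs are the `inv`-fixed half-edges. -/
def IsLeg (x : G.X) : Prop := G.IsHalf x ∧ G.inv x = x

/-- Halves of genuine edges: half-edges moved by the involution. -/
def IsEdgeHalf (x : G.X) : Prop := G.IsHalf x ∧ G.inv x ≠ x

noncomputable def vertexSet : Finset G.X := cfilter (fun x => G.IsVertex x) Finset.univ

noncomputable def legSet : Finset G.X := cfilter (fun x => G.IsLeg x) Finset.univ

noncomputable def edgeHalfSet : Finset G.X := cfilter (fun x => G.IsEdgeHalf x) Finset.univ

/-- Tangent directions at a vertex `v`: half-edges rooted at `v`. -/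
noncomputable def tangents (v : G.X) : Finset G.X :=
  cfilter (fun h => G.IsHalf h ∧ G.rt h = v) Finset.univ

noncomputable def valence (v : G.X) : ℕ := (G.tangents v).card

/-- The number of edges: half the number of edge half-edges. -/
noncomputable def numEdges : ℕ := G.edgeHalfSet.card / 2

noncomputable def numLegs : ℕ := G.legSet.card

noncomputable def numVertices : ℕ := G.vertexSet.card

/-- Connectedness: the equivalence relation generated by `x ∼ rt x` and `x ∼ inv x`
has a single class (and `X` is nonempty). -/
def Connected : Prop :=
  Nonempty G.X ∧ ∀ x y : G.X, Relation.EqvGen (fun a b => G.rt a = b ∨ G.inv a = b) x y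

/-- A subgraph: a subset of `X` closed under the root map and the involution. -/
def IsSubgraph (F : Finset G.X) : Prop :=
  (∀ x ∈ F, G.rt x ∈ F) ∧ (∀ x ∈ F, G.inv x ∈ F)

/-- Valency of `v` inside a subgraph `F`. -/
noncomputable def valIn (F : Finset G.X) (v : G.X) : ℕ := (G.tangents v ∩ F).card

end PGraph

/-- A morphism of graphs: commutes with the root maps and involutions,
and maps no edge into a leg. -/
structure GraphHom (G' G : PGraph) where
  toFun : G'.X → G.X
  map_rt : ∀ x, toFun (G'.rt x) = G.rt (toFun x)
  map_inv : ∀ x, toFun (G'.inv x) = G.inv (toFun x)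
  edge_not_leg : ∀ h, G'.IsEdgeHalf h → ¬ G.IsLeg (toFun h)

/-- A harmonic morphism of graphs: a graph morphism together with a degree function. -/
structure HarmonicHom (G' G : PGraph) extends GraphHom G' G where
  deg : G'.X → ℕ
  deg_edge : ∀ h, G'.IsEdgeHalf h → deg (G'.inv h) = deg h
  deg_zero_iff : ∀ h, G'.IsHalf h → (deg h = 0 ↔ G.IsVertex (toFun h))
  harmonic : ∀ v', G'.IsVertex v' → ∀ h, G.IsHalf h → G.rt h = toFun v' →
    deg v' = ∑ h' ∈ cfilter (fun h' => toFun h' = h) (G'.tangents v'), deg h'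

namespace HarmonicHom

variable {G' G : PGraph} (φ : HarmonicHom G' G)

/-- A harmonic morphism is finite if it has positive degree on every half-edge. -/
def Finite : Prop := ∀ h, G'.IsHalf h → 0 < φ.deg h

/-- The sum of the degrees over the vertex fiber of `v`. -/
noncomputable def vertexFiberDeg (v : G.X) : ℕ :=
  ∑ v' ∈ cfilter (fun v' => φ.toFun v' = v) G'.vertexSet, φ.deg v'

end HarmonicHom

/-- A weighted graph: a graph together with a genus function on (all elements;
only the values at vertices are relevant). -/
structure WGraph extends PGraph where
  gw : X → ℕ

namespace WGraph

variable (G : WGraph)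

/-- The genus of a (connected) weighted graph. -/
noncomputable def genus : ℤ :=
  (G.toPGraph.numEdges : ℤ) - (G.toPGraph.numVertices : ℤ) + 1 +
    ∑ v ∈ G.toPGraph.vertexSet, (G.gw v : ℤ)

/-- The Euler characteristic of a vertex. -/
noncomputable def chiV (v : G.X) : ℤ :=
  2 - 2 * (G.gw v : ℤ) - (G.toPGraph.valence v : ℤ)

/-- The Euler characteristic of a (connected) weighted graph. -/
noncomputable def chi : ℤ := 2 - 2 * G.genus - (G.toPGraph.numLegs : ℤ)

end WGraph

/-- The ramification degree of a (finite) harmonic morphism of weighted graphs at `v'`. -/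
noncomputable def ram {G' G : WGraph} (φ : HarmonicHom G'.toPGraph G.toPGraph) (v' : G'.X) : ℤ :=
  (φ.deg v' : ℤ) * G.chiV (φ.toFun v') - G'.chiV v'

def Unramified {G' G : WGraph} (φ : HarmonicHom G'.toPGraph G.toPGraph) : Prop :=
  ∀ v', G'.toPGraph.IsVertex v' → ram φ v' = 0

def Effective {G' G : WGraph} (φ : HarmonicHom G'.toPGraph G.toPGraph) : Prop :=
  ∀ v', G'.toPGraph.IsVertex v' → 0 ≤ ram φ v'

/-- Two harmonic morphisms with the same target are isomorphic if there is an isomorphism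
of the weighted source graphs commuting with the morphisms and matching the degrees. -/
def CoverIso {B G1 G2 : WGraph} (φ1 : HarmonicHom G1.toPGraph B.toPGraph)
    (φ2 : HarmonicHom G2.toPGraph B.toPGraph) : Prop :=
  ∃ α : G1.X → G2.X, Function.Bijective α ∧
    (∀ x, α (G1.rt x) = G2.rt (α x)) ∧ (∀ x, α (G1.inv x) = G2.inv (α x)) ∧
    (∀ v, G1.toPGraph.IsVertex v → G2.gw (α v) = G1.gw v) ∧
    (∀ x, φ2.toFun (α x) = φ1.toFun x) ∧ (∀ x, φ2.deg (α x) = φ1.deg x)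
/-! Every half-edge of `G'` has positive degree because `φ` is finite, and so does every vertex,
since a vertex of degree `0` would be isolated, hence (by connectedness) all of `G'`, contradicting
`d ≥ 1`. The degrees over any element of `G` add up to `d`, so `G'` has at most `d · #X(G)`
elements, all of degree at most `d`. At a vertex `v'`, `Ram φ v' = 0` reads
`2 g'(v') = 2 - val(v') - d_φ(v') χ(φ v')`, which bounds the genus `g'(v')`. Transported to
`Fin m`, a cover with these bounds is described by one of finitely many codes, and covers with
the same code are isomorphic. -/

lemma mem_cfilter {α : Type*} {p : α → Prop} {s : Finset α} {a : α} :
    a ∈ cfilter p s ↔ a ∈ s ∧ p a :=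
  @Finset.mem_filter _ p (Classical.decPred p) s a

theorem exists_fin_family_of_finite_code {α β : Type*} [Finite α] (E : α → β → Prop)
    (R : β → β → Prop) (hE : ∀ a p q, E a p → E a q → R p q) :
    ∃ (n : ℕ) (f : Fin n → β), ∀ a p, E a p → ∃ i, R p (f i) := by
  let e := Finite.equivFin {a : α // ∃ p, E a p}
  refine ⟨_, fun i => (e.symm i).2.choose, fun a p hp => ⟨e ⟨a, p, hp⟩, ?_⟩⟩
  have key : ∀ t : {a : α // ∃ p, E a p}, t.1 = a → R p t.2.choose := by
    rintro ⟨_, hq⟩ rfl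
    exact hE _ _ _ hp hq.choose_spec
  exact key _ (by rw [e.symm_apply_apply])

namespace PGraph

variable {G : PGraph}

lemma isVertex_rt (x : G.X) : G.IsVertex (G.rt x) := G.rt_idem x

lemma inv_eq_self_of_isVertex {v : G.X} (hv : G.IsVertex v) : G.inv v = v := by
  rw [← hv, G.inv_fix_rt]

lemma mem_tangents {v h : G.X} : h ∈ G.tangents v ↔ G.IsHalf h ∧ G.rt h = v := by
  simp [tangents, mem_cfilter]

lemma mem_vertexSet {x : G.X} : x ∈ G.vertexSet ↔ G.IsVertex x := by
  simp [vertexSet, mem_cfilter]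

lemma eq_of_tangents_eq_empty (hG : G.Connected) {v : G.X} (hv : G.IsVertex v)
    (hT : G.tangents v = ∅) (x : G.X) : x = v := by
  have step : ∀ a b, (G.rt a = b ∨ G.inv a = b) → (a = v ↔ b = v) := by
    rintro a b (rfl | rfl)
    · refine ⟨fun ha => ha ▸ hv, fun hb => ?_⟩
      by_contra ha
      have : a ∈ G.tangents v := mem_tangents.mpr ⟨fun h => ha (h.symm.trans hb), hb⟩
      simp [hT] at this
    · refine ⟨fun ha => by rw [ha, inv_eq_self_of_isVertex hv], fun hb => ?_⟩
      rw [← G.inv_invol a, hb, inv_eq_self_of_isVertex hv]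
  have iff_eqv : Equivalence (fun a b : G.X => (a = v ↔ b = v)) :=
    ⟨fun _ => Iff.rfl, Iff.symm, Iff.trans⟩
  exact (iff_eqv.eqvGen_iff.mp (Relation.EqvGen.mono step _ _ (hG.2 x v))).mpr rfl

end PGraph

namespace HarmonicHom

variable {G' G : PGraph} (φ : HarmonicHom G' G)

def HasDegree (d : ℕ) : Prop := ∀ v, G.IsVertex v → φ.vertexFiberDeg v = d

lemma isVertex_toFun {v : G'.X} (hv : G'.IsVertex v) : G.IsVertex (φ.toFun v) := by
  rw [PGraph.IsVertex, ← φ.map_rt, hv]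

lemma isHalf_toFun (hfin : φ.Finite) {h : G'.X} (hh : G'.IsHalf h) : G.IsHalf (φ.toFun h) :=
  (φ.deg_zero_iff h hh).not.mp (hfin h hh).ne'

lemma deg_le_deg_of_mem_tangents (hfin : φ.Finite) {v h : G'.X} (hv : G'.IsVertex v)
    (hT : h ∈ G'.tangents v) : φ.deg h ≤ φ.deg v := by
  obtain ⟨hh, rfl⟩ := PGraph.mem_tangents.mp hT
  rw [φ.harmonic _ hv _ (φ.isHalf_toFun hfin hh) (φ.map_rt h).symm]
  exact single_le_sum (fun _ _ => Nat.zero_le _) (mem_cfilter.mpr ⟨hT, rfl⟩)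

lemma sum_deg_fiber_of_isVertex (hfin : φ.Finite) {v : G.X} (hv : G.IsVertex v) :
    ∑ x with φ.toFun x = v, φ.deg x = φ.vertexFiberDeg v := by
  refine sum_congr (Finset.ext fun x => ?_) fun _ _ => rfl
  simp only [mem_filter, mem_univ, true_and, mem_cfilter, PGraph.mem_vertexSet]
  refine ⟨fun hx => ⟨?_, hx⟩, And.right⟩
  by_contra hx'
  exact φ.isHalf_toFun hfin hx' (hx ▸ hv)

/-- Harmonicity at each vertex over `G.rt h` splits the fibre of `h` by roots. -/
lemma sum_deg_fiber_of_isHalf {h : G.X} (hh : G.IsHalf h) :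
    ∑ x with φ.toFun x = h, φ.deg x = φ.vertexFiberDeg (G.rt h) := by
  have maps : ∀ x ∈ univ.filter (φ.toFun · = h),
      G'.rt x ∈ cfilter (fun v => φ.toFun v = G.rt h) G'.vertexSet := by
    intro x hx
    rw [mem_filter] at hx
    exact mem_cfilter.mpr ⟨PGraph.mem_vertexSet.mpr (PGraph.isVertex_rt x), hx.2 ▸ φ.map_rt x⟩
  rw [vertexFiberDeg, ← sum_fiberwise_of_maps_to maps]
  refine sum_congr rfl fun v hv => ?_
  obtain ⟨hvV, hvh⟩ := mem_cfilter.mp hv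
  rw [φ.harmonic v (PGraph.mem_vertexSet.mp hvV) h hh hvh.symm]
  refine sum_congr (Finset.ext fun x => ?_) fun _ _ => rfl
  simp only [mem_filter, mem_univ, true_and, mem_cfilter, PGraph.mem_tangents]
  refine ⟨fun ⟨hx, hxv⟩ => ⟨⟨fun hxV => hh (hx ▸ φ.isVertex_toFun hxV), hxv⟩, hx⟩,
    fun ⟨⟨_, hxv⟩, hx⟩ => ⟨hx, hxv⟩⟩

variable {φ} {d : ℕ}

lemma sum_deg_fiber (hfin : φ.Finite) (hdeg : φ.HasDegree d) (x : G.X) :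
    ∑ x' with φ.toFun x' = x, φ.deg x' = d := by
  by_cases hx : G.IsVertex x
  · rw [φ.sum_deg_fiber_of_isVertex hfin hx, hdeg x hx]
  · rw [φ.sum_deg_fiber_of_isHalf hx, hdeg _ (PGraph.isVertex_rt x)]

lemma deg_le (hfin : φ.Finite) (hdeg : φ.HasDegree d) (x : G'.X) : φ.deg x ≤ d := by
  rw [← sum_deg_fiber hfin hdeg (φ.toFun x)]
  exact single_le_sum (fun _ _ => Nat.zero_le _) (by simp)

lemma deg_pos (hfin : φ.Finite) (hG' : G'.Connected) (hd : 1 ≤ d) (hdeg : φ.HasDegree d)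
    (x : G'.X) : 0 < φ.deg x := by
  refine (em (G'.IsVertex x)).elim (fun hx => ?_) (hfin x)
  by_contra h0
  replace h0 : φ.deg x = 0 := by omega
  have hT : G'.tangents x = ∅ := eq_empty_of_forall_notMem fun h hT =>
    (hfin h (PGraph.mem_tangents.mp hT).1).ne' (by
      simpa [h0] using φ.deg_le_deg_of_mem_tangents hfin hx hT)
  have hall := PGraph.eq_of_tangents_eq_empty hG' hx hT
  have hsum := sum_deg_fiber hfin hdeg (φ.toFun x)
  rw [sum_eq_zero fun y _ => by rw [hall y, h0]] at hsum
  omega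

lemma card_le (hfin : φ.Finite) (hG' : G'.Connected) (hd : 1 ≤ d) (hdeg : φ.HasDegree d) :
    Fintype.card G'.X ≤ Fintype.card G.X * d :=
  calc Fintype.card G'.X = ∑ _x : G'.X, 1 := by simp
    _ ≤ ∑ x, φ.deg x := sum_le_sum fun x _ => deg_pos hfin hG' hd hdeg x
    _ = ∑ x : G.X, ∑ x' with φ.toFun x' = x, φ.deg x' := (sum_fiberwise _ _ _).symm
    _ = Fintype.card G.X * d := by simp [sum_deg_fiber hfin hdeg]

end HarmonicHom

section Genus

variable {G' G : WGraph} (φ : HarmonicHom G'.toPGraph G.toPGraph)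

lemma gw_le_of_ram_eq_zero {v : G'.X} (hv : ram φ v = 0) :
    G'.gw v ≤ 1 + φ.deg v * (G.gw (φ.toFun v) + G.toPGraph.valence (φ.toFun v)) := by
  simp only [ram, WGraph.chiV] at hv
  zify
  nlinarith

lemma gw_le_of_unramified (hunr : Unramified φ) {d : ℕ} (hdeg : ∀ x, φ.deg x ≤ d) {v : G'.X}
    (hv : G'.toPGraph.IsVertex v) :
    G'.gw v ≤ 1 + d * (∑ x, G.gw x + Fintype.card G.X) := by
  refine (gw_le_of_ram_eq_zero φ (hunr v hv)).trans ?_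
  gcongr
  · exact hdeg v
  · exact single_le_sum (fun _ _ => Nat.zero_le _) (mem_univ _)
  · exact card_le_univ _

end Genus

structure CoverCode (G : WGraph) (d K N : ℕ) where
  m : Fin (N + 1)
  rt : Fin m → Fin m
  inv : Fin m → Fin m
  gw : Fin m → Fin (K + 1)
  toFun : Fin m → G.X
  deg : Fin m → Fin (d + 1)

namespace CoverCode

variable {G : WGraph} {d K N : ℕ}

def equivSigma (G : WGraph) (d K N : ℕ) :
    CoverCode G d K N ≃ Σ m : Fin (N + 1), (Fin m → Fin m) × (Fin m → Fin m) ×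
      (Fin m → Fin (K + 1)) × (Fin m → G.X) × (Fin m → Fin (d + 1)) where
  toFun t := ⟨t.m, t.rt, t.inv, t.gw, t.toFun, t.deg⟩
  invFun s := ⟨s.1, s.2.1, s.2.2.1, s.2.2.2.1, s.2.2.2.2.1, s.2.2.2.2.2⟩

instance : Finite (CoverCode G d K N) := .of_equiv _ (equivSigma G d K N).symm

structure Encodes (t : CoverCode G d K N) {G' : WGraph}
    (φ : HarmonicHom G'.toPGraph G.toPGraph) (e : G'.X ≃ Fin t.m) : Prop where
  rt : ∀ x, t.rt (e x) = e (G'.rt x)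
  inv : ∀ x, t.inv (e x) = e (G'.inv x)
  gw : ∀ v, G'.toPGraph.IsVertex v → (t.gw (e v) : ℕ) = G'.gw v
  toFun : ∀ x, t.toFun (e x) = φ.toFun x
  deg : ∀ x, (t.deg (e x) : ℕ) = φ.deg x

lemma Encodes.coverIso {t : CoverCode G d K N} {G₁ G₂ : WGraph}
    {φ₁ : HarmonicHom G₁.toPGraph G.toPGraph} {φ₂ : HarmonicHom G₂.toPGraph G.toPGraph}
    {e₁ : G₁.X ≃ Fin t.m} {e₂ : G₂.X ≃ Fin t.m} (h₁ : t.Encodes φ₁ e₁) (h₂ : t.Encodes φ₂ e₂) :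
    CoverIso φ₁ φ₂ := by
  have map_rt : ∀ x, e₂.symm (e₁ (G₁.rt x)) = G₂.rt (e₂.symm (e₁ x)) := fun x =>
    e₂.injective (by simp [← h₂.rt, ← h₁.rt])
  refine ⟨e₂.symm ∘ e₁, (e₁.trans e₂.symm).bijective, map_rt,
    fun x => e₂.injective (by simp [← h₂.inv, ← h₁.inv]), fun v hv => ?_, fun x => ?_,
    fun x => ?_⟩
  · have hv₂ : G₂.toPGraph.IsVertex (e₂.symm (e₁ v)) := by
      rw [PGraph.IsVertex, ← map_rt, hv]
    rw [Function.comp_apply, ← h₂.gw _ hv₂, ← h₁.gw _ hv, e₂.apply_symm_apply]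
  · rw [Function.comp_apply, ← h₂.toFun, ← h₁.toFun, e₂.apply_symm_apply]
  · rw [Function.comp_apply, ← h₂.deg, ← h₁.deg, e₂.apply_symm_apply]

lemma exists_encodes {G' : WGraph} (φ : HarmonicHom G'.toPGraph G.toPGraph)
    (hcard : Fintype.card G'.X ≤ N) (hdeg : ∀ x, φ.deg x ≤ d)
    (hgw : ∀ v, G'.toPGraph.IsVertex v → G'.gw v ≤ K) :
    ∃ (t : CoverCode G d K N) (e : G'.X ≃ Fin t.m), t.Encodes φ e := by
  let e := Fintype.equivFin G'.X
  refine ⟨⟨⟨_, Nat.lt_succ_of_le hcard⟩, fun y => e (G'.rt (e.symm y)),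
    fun y => e (G'.inv (e.symm y)), fun y => ⟨min (G'.gw (e.symm y)) K, by omega⟩,
    fun y => φ.toFun (e.symm y), fun y => ⟨φ.deg (e.symm y), Nat.lt_succ_of_le (hdeg _)⟩⟩,
    e, ⟨fun x => by simp, fun x => by simp, fun v hv => by simp [min_eq_left (hgw v hv)],
      fun x => by simp, fun x => by simp⟩⟩

end CoverCode

theorem finitely_many_unramified_covers_general
    (G : WGraph) (d : ℕ) (hd : 1 ≤ d) :
    ∃ (n : ℕ) (Gs : Fin n → WGraph)
      (φs : ∀ i, HarmonicHom (Gs i).toPGraph G.toPGraph),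
      ∀ (G' : WGraph), G'.toPGraph.Connected →
        ∀ φ : HarmonicHom G'.toPGraph G.toPGraph,
          φ.Finite → Unramified φ →
          (∀ v, G.toPGraph.IsVertex v → φ.vertexFiberDeg v = d) →
          ∃ i, CoverIso φ (φs i) := by
  obtain ⟨n, covers, hcovers⟩ := exists_fin_family_of_finite_code
    (α := CoverCode G d (1 + d * (∑ x, G.gw x + Fintype.card G.X)) (Fintype.card G.X * d))
    (fun t (p : Σ G' : WGraph, HarmonicHom G'.toPGraph G.toPGraph) => ∃ e, t.Encodes p.2 e)
    (fun p q => CoverIso p.2 q.2) (fun _ _ _ ⟨_, h₁⟩ ⟨_, h₂⟩ => h₁.coverIso h₂)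
  refine ⟨n, fun i => (covers i).1, fun i => (covers i).2, fun G' hG' φ hfin hunr hdeg => ?_⟩
  have hdeg_le := HarmonicHom.deg_le hfin hdeg
  obtain ⟨t, e, ht⟩ := CoverCode.exists_encodes φ (HarmonicHom.card_le hfin hG' hd hdeg) hdeg_le
    fun v hv => gw_le_of_unramified φ hunr hdeg_le hv
  exact hcovers t ⟨G', φ⟩ ⟨e, ht⟩

/-- Let `(G,g)` be a connected weighted graph and `d ≥ 1`.  Up to
isomorphism there are only finitely many unramified finite harmonic morphisms
`φ : (G',g') → (G,g)` of degree `d` with `G'` connected: there is a finite family of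
such morphisms such that every one is isomorphic to a member of the family. -/
theorem finitely_many_unramified_covers
    (G : WGraph) (hG : G.toPGraph.Connected) (d : ℕ) (hd : 1 ≤ d) :
    ∃ (n : ℕ) (Gs : Fin n → WGraph)
      (φs : ∀ i, HarmonicHom (Gs i).toPGraph G.toPGraph),
      ∀ (G' : WGraph), G'.toPGraph.Connected →
        ∀ φ : HarmonicHom G'.toPGraph G.toPGraph,
          φ.Finite → Unramified φ →
          (∀ v, G.toPGraph.IsVertex v → φ.vertexFiberDeg v = d) →
          ∃ i, CoverIso φ (φs i) :=
  finitely_many_unramified_covers_general G d hd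

end TropDR
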